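/- Split-setting switch coefficients under β-mixing: if Z ∈ Z^{n+1} is stationary with β-mixing coefficients β(τ), then in the split conformal setting, for τ* ≥ 0, L ≤ τ ≤ n_1 − τ*, and 1 ≤ k ≤ n_1 − L + 1 − τ*, the switch coefficients of the truncated score vector satisfy Ψ_{k,τ}(S_{split,τ*}) ≤ 2β(τ*) + 2β(τ−L) for 1 ≤ k ≤ n_1 − τ − τ*, and Ψ_{k,τ}(S_{split,τ*}) ≤ 2β(τ*) for n_1 − τ − τ* < k ≤ n_1 − L + 1 − τ*. -/

import Mathlib

open MeasureTheory
open scoped ENNReal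

/-- The `j`-th order statistic (1-indexed) of a finite real vector. -/
noncomputable def orderStat {m : ℕ} (v : Fin m → ℝ) (j : ℕ) : ℝ :=
  ((List.ofFn v).mergeSort (fun x y => x ≤ y)).getD (j - 1) 0

/-- `Quantile b v` is the `⌈b·m⌉`-th order statistic of `v ∈ ℝ^m`, with the conventions
`Quantile b v = ⊤` if `b > 1` and `Quantile b v = ⊥` if `b ≤ 0`. -/
noncomputable def Quantile {m : ℕ} (b : ℝ) (v : Fin m → ℝ) : EReal :=
  if b > 1 then ⊤ else if b ≤ 0 then ⊥ else ((orderStat v ⌈b * m⌉.toNat : ℝ) : EReal)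

/-- The deletion operator `Δ⁰_{k,τ}` of the paper (with `k` and `τ` counts of entries). -/
def delta0 {α : Type*} (m k τ : ℕ) (w : Fin m → α) : Fin (m - τ) → α :=
  fun i =>
    if i.val < m - τ - k then w ⟨i.val, by have := i.isLt; omega⟩
    else w ⟨i.val + τ, by have := i.isLt; omega⟩

/-- The deletion operator `Δ¹_{k,τ}` of the paper. -/
def delta1 {α : Type*} (m k τ : ℕ) (w : Fin m → α) : Fin (m - τ) → α :=
  fun i =>
    if h : k + τ < m then
      if h2 : i.val < m - τ - k then w ⟨i.val + k + τ, by have := i.isLt; omega⟩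
      else w ⟨i.val - (m - τ - k), by have := i.isLt; omega⟩
    else w ⟨(i.val + k + τ - m) % m, Nat.mod_lt _ (by have := i.isLt; omega)⟩

/-- Total variation distance between the laws of two random elements `U, V` under `P`. -/
noncomputable def dTV {Ω γ : Type*} [MeasurableSpace Ω] [MeasurableSpace γ]
    (P : Measure Ω) (U V : Ω → γ) : ℝ :=
  ⨆ E : {E : Set γ // MeasurableSet E}, |(P (U ⁻¹' E.1)).toReal - (P (V ⁻¹' E.1)).toReal|

/-- The switch coefficient `Ψ_{k,τ}(W)` of a random vector `W` of length `m`. -/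
noncomputable def switchCoef {Ω α : Type*} [MeasurableSpace Ω] [MeasurableSpace α]
    (P : Measure Ω) {m : ℕ} (W : Ω → Fin m → α) (k τ : ℕ) : ℝ :=
  dTV P (fun ω => delta0 m k τ (W ω)) (fun ω => delta1 m k τ (W ω))

/-- The averaged switch coefficient `Ψ̄_τ(W) = (1/m) ∑_{k=1}^m Ψ_{k,τ}(W)`. -/
noncomputable def avgSwitchCoef {Ω α : Type*} [MeasurableSpace Ω] [MeasurableSpace α]
    (P : Measure Ω) {m : ℕ} (W : Ω → Fin m → α) (τ : ℕ) : ℝ :=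
  (∑ k ∈ Finset.Icc 1 m, switchCoef P W k τ) / m

/-- Stationarity of a time series `Z = (Z_1,…,Z_{n+1})`. -/
def Stationary {Ω α : Type*} [MeasurableSpace Ω] [MeasurableSpace α]
    (P : Measure Ω) {n : ℕ} (Z : Ω → Fin (n + 1) → α) : Prop :=
  ∀ (ℓ i : ℕ) (h : i + ℓ ≤ n + 1),
    Measure.map (fun ω (j : Fin ℓ) => Z ω ⟨i + j.val, by have := j.isLt; omega⟩) P =
      Measure.map (fun ω (j : Fin ℓ) => Z ω ⟨j.val, by have := j.isLt; omega⟩) P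

/-- Exchangeability of a random vector. -/
def Exchangeable {Ω α : Type*} [MeasurableSpace Ω] [MeasurableSpace α]
    (P : Measure Ω) {n : ℕ} (Z : Ω → Fin (n + 1) → α) : Prop :=
  ∀ σ : Equiv.Perm (Fin (n + 1)),
    Measure.map (fun ω => Z ω ∘ σ) P = Measure.map Z P

/-- The β-mixing coefficient with lag `τ` of `Z`, defined via an independent copy `Z'`. -/
noncomputable def betaMix {Ω α : Type*} [MeasurableSpace Ω] [MeasurableSpace α]
    (P : Measure Ω) (n : ℕ) (Z Z' : Ω → Fin (n + 1) → α) (τ : ℕ) : ℝ :=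
  ⨆ k : Fin (n - τ),
    dTV P
      (fun ω (i : Fin (n + 1 - τ)) =>
        if i.val < k.val + 1 then Z ω ⟨i.val, by have := i.isLt; omega⟩
        else Z ω ⟨i.val + τ, by have := i.isLt; omega⟩)
      (fun ω (i : Fin (n + 1 - τ)) =>
        if i.val < k.val + 1 then Z ω ⟨i.val, by have := i.isLt; omega⟩
        else Z' ω ⟨i.val + τ, by have := i.isLt; omega⟩)

/-!
Both `Δ⁰_{k,τ} S` and `Δ¹_{k,τ} S` are the same measurable function of the training block
`Z_0, …, Z_{n0-1}` and of one stretch (if `k + τ ≥ |S|`) or two stretches (if `k + τ < |S|`) of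
observations from time `n0 + τs` on; two such stretches are `τ - L` time steps apart, since
consecutive windows share `L` observations. Through the independent copy `Z'`, β-mixing bounds the
total variation distance between the joint law of a statistic of the past and a statistic of the
future beyond a gap, and the product of their laws. So replacing the joint law of the training
block and the stretches by the product of their laws costs `β(τs)`, plus `β(τ - L)` when there are
two stretches. By stationarity these product laws are the same for `Δ⁰` and `Δ¹`, and the
triangle inequality doubles the cost.
-/

open ProbabilityTheory Set

noncomputable def tvDist {γ : Type*} [MeasurableSpace γ] (μ ν : Measure γ) : ℝ :=
  ⨆ E : {E : Set γ // MeasurableSet E}, |μ.real E - ν.real E|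

section TVDist

variable {γ δ : Type*} [MeasurableSpace γ] [MeasurableSpace δ] {μ ν ρ : Measure γ}

lemma abs_measureReal_sub_le (μ ν : Measure γ) [IsFiniteMeasure μ] [IsFiniteMeasure ν]
    (s t : Set γ) : |μ.real s - ν.real t| ≤ μ.real univ + ν.real univ := by
  have hs : μ.real s ≤ μ.real univ := measureReal_mono (subset_univ s)
  have ht : ν.real t ≤ ν.real univ := measureReal_mono (subset_univ t)
  rw [abs_sub_le_iff]
  constructor <;> linarith [measureReal_nonneg (μ := μ) (s := s),
    measureReal_nonneg (μ := ν) (s := t)]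

lemma abs_measureReal_sub_le_tvDist [IsFiniteMeasure μ] [IsFiniteMeasure ν] {E : Set γ}
    (hE : MeasurableSet E) : |μ.real E - ν.real E| ≤ tvDist μ ν :=
  le_ciSup (f := fun E : {E : Set γ // MeasurableSet E} => |μ.real E - ν.real E|)
    ⟨_, forall_mem_range.2 fun E => abs_measureReal_sub_le μ ν E E⟩ ⟨E, hE⟩

lemma tvDist_le {c : ℝ} (h : ∀ E, MeasurableSet E → |μ.real E - ν.real E| ≤ c) :
    tvDist μ ν ≤ c :=
  ciSup_le fun E => h E.1 E.2

lemma tvDist_self (μ : Measure γ) : tvDist μ μ = 0 := by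
  simp [tvDist]

lemma tvDist_comm (μ ν : Measure γ) : tvDist μ ν = tvDist ν μ := by
  simp only [tvDist, abs_sub_comm]

lemma tvDist_triangle [IsFiniteMeasure μ] [IsFiniteMeasure ν] [IsFiniteMeasure ρ] :
    tvDist μ ρ ≤ tvDist μ ν + tvDist ν ρ :=
  tvDist_le fun E hE => (abs_sub_le _ (ν.real E) _).trans <|
    add_le_add (abs_measureReal_sub_le_tvDist hE) (abs_measureReal_sub_le_tvDist hE)

lemma measureReal_prod_apply (μ : Measure γ) (ν : Measure δ) [IsFiniteMeasure μ] [IsFiniteMeasure ν]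
    {E : Set (γ × δ)} (hE : MeasurableSet E) :
    (μ.prod ν).real E = ∫ x, ν.real (Prod.mk x ⁻¹' E) ∂μ := by
  rw [measureReal_def, Measure.prod_apply hE]
  exact (integral_toReal (measurable_measure_prodMk_left hE).aemeasurable
    (ae_of_all _ fun _ => measure_lt_top _ _)).symm

lemma tvDist_prod_le (μ : Measure γ) [IsProbabilityMeasure μ] (ν ν' : Measure δ)
    [IsFiniteMeasure ν] [IsFiniteMeasure ν'] :
    tvDist (μ.prod ν) (μ.prod ν') ≤ tvDist ν ν' := by
  refine tvDist_le fun E hE => ?_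
  have hmeas : ∀ ν : Measure δ, [IsFiniteMeasure ν] →
      Integrable (fun x => ν.real (Prod.mk x ⁻¹' E)) μ := fun ν _ =>
    .of_bound (measurable_measure_prodMk_left hE).ennreal_toReal.aestronglyMeasurable
      (ν.real univ) (ae_of_all _ fun x => by
        rw [Real.norm_of_nonneg measureReal_nonneg]; exact measureReal_mono (subset_univ _))
  rw [measureReal_prod_apply μ ν hE, measureReal_prod_apply μ ν' hE,
    ← integral_sub (hmeas ν) (hmeas ν')]
  simpa using norm_integral_le_of_norm_le_const (μ := μ) (ae_of_all _ fun x =>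
    (Real.norm_eq_abs _).trans_le (abs_measureReal_sub_le_tvDist (measurable_prodMk_left hE)))

end TVDist

lemma dTV_eq_tvDist {Ω γ : Type*} [MeasurableSpace Ω] [MeasurableSpace γ] (P : Measure Ω)
    {U V : Ω → γ} (hU : Measurable U) (hV : Measurable V) :
    dTV P U V = tvDist (P.map U) (P.map V) := by
  refine iSup_congr fun E => ?_
  rw [measureReal_def, measureReal_def, Measure.map_apply hU E.2, Measure.map_apply hV E.2]

lemma dTV_self {Ω γ : Type*} [MeasurableSpace Ω] [MeasurableSpace γ] (P : Measure Ω)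
    (U : Ω → γ) : dTV P U U = 0 := by
  simp [dTV]

lemma dTV_nonneg {Ω γ : Type*} [MeasurableSpace Ω] [MeasurableSpace γ] (P : Measure Ω)
    (U V : Ω → γ) : 0 ≤ dTV P U V :=
  Real.iSup_nonneg fun _ => abs_nonneg _

lemma betaMix_nonneg {Ω α : Type*} [MeasurableSpace Ω] [MeasurableSpace α] (P : Measure Ω)
    (n : ℕ) (Z Z' : Ω → Fin (n + 1) → α) (τ : ℕ) : 0 ≤ betaMix P n Z Z' τ :=
  Real.iSup_nonneg fun _ => dTV_nonneg _ _ _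

section DTV

variable {Ω γ δ : Type*} [MeasurableSpace Ω] [MeasurableSpace γ] [MeasurableSpace δ]
  (P : Measure Ω) [IsFiniteMeasure P]

lemma dTV_le_add_measureReal_univ (U V : Ω → γ) : dTV P U V ≤ P.real univ + P.real univ :=
  ciSup_le fun _ => abs_measureReal_sub_le P P _ _

lemma dTV_comp_le {Φ : γ → δ} (hΦ : Measurable Φ) (U V : Ω → γ) :
    dTV P (fun ω => Φ (U ω)) (fun ω => Φ (V ω)) ≤ dTV P U V :=
  ciSup_le fun E => le_ciSup
    (f := fun E : {E : Set γ // MeasurableSet E} => |(P (U ⁻¹' E)).toReal - (P (V ⁻¹' E)).toReal|)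
    ⟨_, forall_mem_range.2 fun _ => abs_measureReal_sub_le P P _ _⟩ ⟨Φ ⁻¹' E, hΦ E.2⟩

lemma dTV_comp_le_tvDist_add {β : Type*} [MeasurableSpace β] {X Y : Ω → β} {Φ : β → γ}
    (hΦ : Measurable Φ) (hX : Measurable X) (hY : Measurable Y) (M : Measure β)
    [IsFiniteMeasure M] :
    dTV P (fun ω => Φ (X ω)) (fun ω => Φ (Y ω)) ≤ tvDist (P.map X) M + tvDist (P.map Y) M := by
  calc dTV P (fun ω => Φ (X ω)) (fun ω => Φ (Y ω))
      ≤ dTV P X Y := dTV_comp_le P hΦ X Y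
    _ = tvDist (P.map X) (P.map Y) := dTV_eq_tvDist P hX hY
    _ ≤ tvDist (P.map X) M + tvDist M (P.map Y) := tvDist_triangle
    _ = tvDist (P.map X) M + tvDist (P.map Y) M := by rw [tvDist_comm M]

end DTV

lemma DependsOn.prodMk {ι γ δ : Type*} {β : ι → Type*} {f : (Π i, β i) → γ} {g : (Π i, β i) → δ}
    {s : Set ι} (hf : DependsOn f s) (hg : DependsOn g s) : DependsOn (fun x => (f x, g x)) s :=
  fun _ _ h => Prod.ext (hf h) (hg h)

section BetaMixing

variable {Ω α γ δ : Type*} [MeasurableSpace Ω] [MeasurableSpace α] [MeasurableSpace γ]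
  [MeasurableSpace δ] {P : Measure Ω} [IsProbabilityMeasure P] {n : ℕ}
  {Z Z' : Ω → Fin (n + 1) → α} {f : (Fin (n + 1) → α) → γ} {g : (Fin (n + 1) → α) → δ}
  {c τ : ℕ}

def gapSplice (c τ : ℕ) (z y : Fin (n + 1) → α) : Fin (n + 1 - τ) → α := fun i =>
  if i.val < c + 1 then z ⟨i.val, by omega⟩ else y ⟨i.val + τ, by omega⟩

lemma dTV_gapSplice_le_betaMix (hcτ : c + τ < n) :
    dTV P (fun ω => gapSplice c τ (Z ω) (Z ω)) (fun ω => gapSplice c τ (Z ω) (Z' ω)) ≤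
      betaMix P n Z Z' τ :=
  le_ciSup (f := fun k : Fin (n - τ) =>
      dTV P (fun ω => gapSplice k τ (Z ω) (Z ω)) (fun ω => gapSplice k τ (Z ω) (Z' ω)))
    ⟨_, forall_mem_range.2 fun _ => dTV_le_add_measureReal_univ P _ _⟩ ⟨c, by omega⟩

theorem dTV_prodMk_le_betaMix (hf : Measurable f) (hg : Measurable g) (hcτ : c + τ < n)
    (hfc : DependsOn f {i | i.val ≤ c}) (hgc : DependsOn g {i | c + τ < i.val}) :
    dTV P (fun ω => (f (Z ω), g (Z ω))) (fun ω => (f (Z ω), g (Z' ω))) ≤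
      betaMix P n Z Z' τ := by
  -- `unsplice` recovers from the spliced path every coordinate that `f` or `g` reads
  let unsplice : (Fin (n + 1 - τ) → α) → Fin (n + 1) → α := fun s i =>
    s ⟨if i.val ≤ c then i.val else i.val - τ, by split_ifs <;> omega⟩
  have hunsplice : Measurable unsplice := measurable_pi_lambda _ fun _ => measurable_pi_apply _
  have hsplice (z y : Fin (n + 1) → α) :
      (f (unsplice (gapSplice c τ z y)), g (unsplice (gapSplice c τ z y))) = (f z, g y) := by
    refine Prod.ext (hfc fun i (hi : i.val ≤ c) => ?_) (hgc fun i (hi : c + τ < i.val) => ?_)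
    · simp [unsplice, gapSplice, hi, Nat.lt_succ_of_le hi]
    · have : ¬ i.val - τ < c + 1 := by omega
      simp only [unsplice, gapSplice, if_neg (show ¬ i.val ≤ c by omega), if_neg this]
      congr 1; ext; dsimp only; omega
  calc dTV P (fun ω => (f (Z ω), g (Z ω))) (fun ω => (f (Z ω), g (Z' ω)))
      = dTV P (fun ω => (f (unsplice (gapSplice c τ (Z ω) (Z ω))),
            g (unsplice (gapSplice c τ (Z ω) (Z ω)))))
          (fun ω => (f (unsplice (gapSplice c τ (Z ω) (Z' ω))),
            g (unsplice (gapSplice c τ (Z ω) (Z' ω))))) := by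
        simp only [hsplice]
    _ ≤ dTV P (fun ω => gapSplice c τ (Z ω) (Z ω)) (fun ω => gapSplice c τ (Z ω) (Z' ω)) :=
        dTV_comp_le P ((hf.comp hunsplice).prodMk (hg.comp hunsplice)) _ _
    _ ≤ betaMix P n Z Z' τ := dTV_gapSplice_le_betaMix hcτ

lemma map_prodMk_eq_prod_of_indepFun {β β' : Type*} [MeasurableSpace β] [MeasurableSpace β']
    {X : Ω → β} {Y : Ω → β'} (hX : Measurable X) (hY : Measurable Y) (hXY : IndepFun X Y P)
    {u : β → γ} {v : β' → δ} (hu : Measurable u) (hv : Measurable v) :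
    P.map (fun ω => (u (X ω), v (Y ω))) =
      (P.map fun ω => u (X ω)).prod (P.map fun ω => v (Y ω)) :=
  (indepFun_iff_map_prod_eq_prod_map_map (hu.comp hX).aemeasurable
    (hv.comp hY).aemeasurable).1 (hXY.comp hu hv)

theorem tvDist_map_prodMk_le_betaMix (hZ : Measurable Z) (hZ' : Measurable Z')
    (hcopy : P.map Z' = P.map Z) (hindep : IndepFun Z Z' P)
    (hf : Measurable f) (hg : Measurable g) (hcτ : c + τ < n)
    (hfc : DependsOn f {i | i.val ≤ c}) (hgc : DependsOn g {i | c + τ < i.val}) :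
    tvDist (P.map fun ω => (f (Z ω), g (Z ω)))
      ((P.map fun ω => f (Z ω)).prod (P.map fun ω => g (Z ω))) ≤ betaMix P n Z Z' τ := by
  have hcopy_g : P.map (fun ω => g (Z' ω)) = P.map (fun ω => g (Z ω)) :=
    (IdentDistrib.comp ⟨hZ'.aemeasurable, hZ.aemeasurable, hcopy⟩ hg).map_eq
  have hU : Measurable fun ω => (f (Z ω), g (Z ω)) := (hf.comp hZ).prodMk (hg.comp hZ)
  have hV : Measurable fun ω => (f (Z ω), g (Z' ω)) := (hf.comp hZ).prodMk (hg.comp hZ')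
  rw [← hcopy_g, ← map_prodMk_eq_prod_of_indepFun hZ hZ' hindep hf hg, ← dTV_eq_tvDist P hU hV]
  exact dTV_prodMk_le_betaMix hf hg hcτ hfc hgc

theorem tvDist_map_prodMk_swap_le_betaMix (hZ : Measurable Z) (hZ' : Measurable Z')
    (hcopy : P.map Z' = P.map Z) (hindep : IndepFun Z Z' P)
    (hf : Measurable f) (hg : Measurable g) (hcτ : c + τ < n)
    (hfc : DependsOn f {i | i.val ≤ c}) (hgc : DependsOn g {i | c + τ < i.val}) :
    tvDist (P.map fun ω => (g (Z ω), f (Z ω)))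
      ((P.map fun ω => g (Z ω)).prod (P.map fun ω => f (Z ω))) ≤ betaMix P n Z Z' τ := by
  have hcopy_g : P.map (fun ω => g (Z' ω)) = P.map (fun ω => g (Z ω)) :=
    (IdentDistrib.comp ⟨hZ'.aemeasurable, hZ.aemeasurable, hcopy⟩ hg).map_eq
  have hU : Measurable fun ω => (g (Z ω), f (Z ω)) := (hg.comp hZ).prodMk (hf.comp hZ)
  have hV : Measurable fun ω => (g (Z' ω), f (Z ω)) := (hg.comp hZ').prodMk (hf.comp hZ)
  rw [← hcopy_g, ← map_prodMk_eq_prod_of_indepFun hZ' hZ hindep.symm hg hf,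
    ← dTV_eq_tvDist P hU hV]
  exact (dTV_comp_le P measurable_swap (fun ω => (f (Z ω), g (Z ω)))
    (fun ω => (f (Z ω), g (Z' ω)))).trans (dTV_prodMk_le_betaMix hf hg hcτ hfc hgc)

theorem tvDist_map_prodMk_prod_le_betaMix_add (hZ : Measurable Z) (hZ' : Measurable Z')
    (hcopy : P.map Z' = P.map Z) (hindep : IndepFun Z Z' P)
    (hf : Measurable f) (hg : Measurable g) (hcτ : c + τ < n)
    (hfc : DependsOn f {i | i.val ≤ c}) (hgc : DependsOn g {i | c + τ < i.val})
    (ρ : Measure δ) [IsFiniteMeasure ρ] :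
    tvDist (P.map fun ω => (f (Z ω), g (Z ω))) ((P.map fun ω => f (Z ω)).prod ρ) ≤
      betaMix P n Z Z' τ + tvDist (P.map fun ω => g (Z ω)) ρ := by
  have : IsProbabilityMeasure (P.map fun ω => f (Z ω)) :=
    Measure.isProbabilityMeasure_map (hf.comp hZ).aemeasurable
  exact tvDist_triangle.trans <| add_le_add
    (tvDist_map_prodMk_le_betaMix hZ hZ' hcopy hindep hf hg hcτ hfc hgc) (tvDist_prod_le _ _ _)

end BetaMixing

section Slices

variable {α : Type*} {N : ℕ}

def slice (d q : ℕ) (h : d + q ≤ N) (z : Fin N → α) : Fin q → α :=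
  fun j => z ⟨d + j, by omega⟩

lemma slice_slice {d q d' q' : ℕ} (h : d + q ≤ q') (h' : d' + q' ≤ N) (z : Fin N → α) :
    slice d q h (slice d' q' h' z) = slice (d' + d) q (by omega) z := by
  funext j
  simp only [slice, Nat.add_assoc]

lemma measurable_slice [MeasurableSpace α] (d q : ℕ) (h : d + q ≤ N) :
    Measurable (slice (α := α) d q h) :=
  measurable_pi_lambda _ fun _ => measurable_pi_apply _

lemma dependsOn_slice {d q : ℕ} {h : d + q ≤ N} {s : Set (Fin N)}
    (hs : ∀ i : Fin N, d ≤ i.val → i.val < d + q → i ∈ s) :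
    DependsOn (slice (α := α) d q h) s :=
  fun _ _ hxy => funext fun j => hxy _ (hs _ (Nat.le_add_right _ _) (by simp))

lemma Stationary.map_slice_eq {Ω : Type*} [MeasurableSpace Ω] [MeasurableSpace α]
    {P : Measure Ω} {n : ℕ} {Z : Ω → Fin (n + 1) → α} (hst : Stationary P Z) {d d' q : ℕ}
    (h : d + q ≤ n + 1) (h' : d' + q ≤ n + 1) :
    P.map (fun ω => slice d q h (Z ω)) = P.map (fun ω => slice d' q h' (Z ω)) :=
  (hst q d h).trans (hst q d' h').symm

end Slices

section Scores

variable {α : Type*} {n0 L : ℕ} (A : (Fin n0 → α) → (Fin (L + 1) → α) → ℝ)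

def blockScores {q : ℕ} (t : Fin n0 → α) (u : Fin (q + L) → α) : Fin q → ℝ :=
  fun r => A t fun l => u ⟨r + L - l, by omega⟩

def twoBlockScores {p q : ℕ} (t : Fin n0 → α) (u₁ : Fin (p + L) → α) (u₂ : Fin (q + L) → α) :
    Fin (p + q) → ℝ :=
  Fin.append (blockScores A t u₁) (blockScores A t u₂)

variable {A}

lemma measurable_blockScores [MeasurableSpace α]
    (hA : Measurable fun x : (Fin n0 → α) × (Fin (L + 1) → α) => A x.1 x.2) (q : ℕ) :
    Measurable fun x : (Fin n0 → α) × (Fin (q + L) → α) => blockScores A x.1 x.2 :=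
  measurable_pi_lambda _ fun _ => hA.comp <| measurable_fst.prodMk <|
    measurable_pi_lambda _ fun _ => (measurable_pi_apply _).comp measurable_snd

lemma measurable_twoBlockScores [MeasurableSpace α]
    (hA : Measurable fun x : (Fin n0 → α) × (Fin (L + 1) → α) => A x.1 x.2) (p q : ℕ) :
    Measurable fun x : (Fin n0 → α) × (Fin (p + L) → α) × (Fin (q + L) → α) =>
      twoBlockScores A x.1 x.2.1 x.2.2 := by
  refine measurable_pi_lambda _ fun i => i.addCases (fun r => ?_) (fun r => ?_)
  · simp only [twoBlockScores, Fin.append_left]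
    exact (measurable_pi_apply r).comp <|
      (measurable_blockScores hA p).comp (measurable_fst.prodMk measurable_snd.fst)
  · simp only [twoBlockScores, Fin.append_right]
    exact (measurable_pi_apply r).comp <|
      (measurable_blockScores hA q).comp (measurable_fst.prodMk measurable_snd.snd)

variable {m k τ : ℕ} (t : Fin n0 → α) (u : Fin (m + L) → α)

lemma delta0_blockScores_of_le (hτ : τ ≤ m) (hk : m ≤ k + τ) :
    delta0 m k τ (blockScores A t u) = blockScores A t (slice τ (m - τ + L) (by omega) u) := by
  funext i
  simp only [delta0, blockScores, slice, if_neg (show ¬ i.val < m - τ - k by omega)]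
  congr 1; funext l; exact congrArg u (Fin.ext (by dsimp only; omega))

lemma delta1_blockScores_of_le (hτ : τ ≤ m) (hk : m ≤ k + τ) (hkm : k ≤ m) :
    delta1 m k τ (blockScores A t u) =
      blockScores A t (slice (k + τ - m) (m - τ + L) (by omega) u) := by
  funext i
  have hi : (i.val + k + τ - m) % m = i.val + k + τ - m := Nat.mod_eq_of_lt (by omega)
  simp only [delta1, blockScores, slice, dif_neg (show ¬ k + τ < m by omega)]
  congr 1; funext l; exact congrArg u (Fin.ext (by simp only [hi]; omega))

lemma delta0_blockScores_of_add_lt (hkτ : k + τ < m) :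
    delta0 m k τ (blockScores A t u) = fun i =>
      twoBlockScores A t (slice 0 (m - τ - k + L) (by omega) u)
        (slice (m - k) (k + L) (by omega) u) (Fin.cast (by omega) i) := by
  funext i
  obtain ⟨j, rfl⟩ : ∃ j : Fin (m - τ - k + k), Fin.cast (by omega) j = i :=
    ⟨Fin.cast (by omega) i, by simp⟩
  simp only [Fin.cast_cast, Fin.cast_eq_self]
  refine j.addCases (fun r => ?_) (fun r => ?_)
  · simp only [twoBlockScores, Fin.append_left, delta0, blockScores, slice, Fin.val_cast,
      Fin.val_castAdd, if_pos r.isLt]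
    congr 1; funext l; exact congrArg u (Fin.ext (by simp))
  · simp only [twoBlockScores, Fin.append_right, delta0, blockScores, slice, Fin.val_cast,
      Fin.val_natAdd, if_neg (show ¬ m - τ - k + r.val < m - τ - k by omega)]
    congr 1; funext l; exact congrArg u (Fin.ext (by dsimp only; omega))

lemma delta1_blockScores_of_add_lt (hkτ : k + τ < m) :
    delta1 m k τ (blockScores A t u) = fun i =>
      twoBlockScores A t (slice (k + τ) (m - τ - k + L) (by omega) u)
        (slice 0 (k + L) (by omega) u) (Fin.cast (by omega) i) := by
  funext i
  obtain ⟨j, rfl⟩ : ∃ j : Fin (m - τ - k + k), Fin.cast (by omega) j = i :=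
    ⟨Fin.cast (by omega) i, by simp⟩
  simp only [Fin.cast_cast, Fin.cast_eq_self]
  refine j.addCases (fun r => ?_) (fun r => ?_)
  · simp only [twoBlockScores, Fin.append_left, delta1, blockScores, slice, Fin.val_cast,
      Fin.val_castAdd, dif_pos hkτ, dif_pos r.isLt]
    congr 1; funext l; exact congrArg u (Fin.ext (by dsimp only; omega))
  · simp only [twoBlockScores, Fin.append_right, delta1, blockScores, slice, Fin.val_cast,
      Fin.val_natAdd, dif_pos hkτ, dif_neg (show ¬ m - τ - k + r.val < m - τ - k by omega)]
    congr 1; funext l; exact congrArg u (Fin.ext (by simp))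

end Scores

section SplitScores

variable {α : Type*} {n n0 L τs m : ℕ} {A : (Fin n0 → α) → (Fin (L + 1) → α) → ℝ}

/-- The truncated split-conformal score vector `S_{split,τs}` of the paper, of length `m`. -/
def splitScores (A : (Fin n0 → α) → (Fin (L + 1) → α) → ℝ) (τs m : ℕ)
    (h : n0 + τs + (m + L) ≤ n + 1) (z : Fin (n + 1) → α) : Fin m → ℝ :=
  fun j => A (fun t => z ⟨t, by omega⟩) (fun l => z ⟨n0 + L + τs + j - l, by omega⟩)

lemma splitScores_eq_blockScores (h : n0 + τs + (m + L) ≤ n + 1) (z : Fin (n + 1) → α) :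
    splitScores A τs m h z =
      blockScores A (slice 0 n0 (by omega) z) (slice (n0 + τs) (m + L) h z) := by
  funext j
  simp only [splitScores, blockScores, slice]
  congr 1
  · funext t; exact congrArg z (Fin.ext (by simp))
  · funext l; exact congrArg z (Fin.ext (by dsimp only; omega))

end SplitScores

lemma switchCoef_eq_zero_of_le {Ω α : Type*} [MeasurableSpace Ω] [MeasurableSpace α]
    (P : Measure Ω) {m : ℕ} (W : Ω → Fin m → α) (k : ℕ) {τ : ℕ} (hτ : m ≤ τ) :
    switchCoef P W k τ = 0 := by
  have : (fun ω => delta0 m k τ (W ω)) = fun ω => delta1 m k τ (W ω) :=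
    funext fun _ => funext fun i => absurd i.isLt (by omega)
  rw [switchCoef, this, dTV_self]

section Stretches

variable {Ω α : Type*} [MeasurableSpace Ω] [MeasurableSpace α] {P : Measure Ω}
  [IsProbabilityMeasure P] {n : ℕ} {Z Z' : Ω → Fin (n + 1) → α} {n0 τs : ℕ}

theorem tvDist_map_slice_prod_le (hZ : Measurable Z) (hZ' : Measurable Z')
    (hst : Stationary P Z) (hcopy : P.map Z' = P.map Z) (hindep : IndepFun Z Z' P)
    (hn0 : 1 ≤ n0) (h₀ : 0 + n0 ≤ n + 1) {d d' q : ℕ} (h : d + q ≤ n + 1) (h' : d' + q ≤ n + 1)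
    (hd : n0 + τs ≤ d) (hq : 0 < q) :
    tvDist (P.map fun ω => (slice 0 n0 h₀ (Z ω), slice d q h (Z ω)))
      ((P.map fun ω => slice 0 n0 h₀ (Z ω)).prod (P.map fun ω => slice d' q h' (Z ω))) ≤
      betaMix P n Z Z' τs := by
  refine (tvDist_map_prodMk_prod_le_betaMix_add hZ hZ' hcopy hindep (measurable_slice _ _ _)
    (measurable_slice _ _ _) (c := n0 - 1) (τ := τs) (by omega)
    (dependsOn_slice fun i _ _ => ?_) (dependsOn_slice fun i _ _ => ?_) _).trans
    (by rw [hst.map_slice_eq h h', tvDist_self, add_zero]) <;>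
  simp only [Set.mem_ofPred_eq] <;> omega

theorem tvDist_map_slice_prod_prod_le (hZ : Measurable Z) (hZ' : Measurable Z')
    (hcopy : P.map Z' = P.map Z) (hindep : IndepFun Z Z' P) (hn0 : 1 ≤ n0) (h₀ : 0 + n0 ≤ n + 1)
    {d₁ q₁ d₂ q₂ τg : ℕ} (h₁ : d₁ + q₁ ≤ n + 1) (h₂ : d₂ + q₂ ≤ n + 1) (hd₁ : n0 + τs ≤ d₁)
    (hd₂ : n0 + τs ≤ d₂) (hq₁ : 0 < q₁) (hq₂ : 0 < q₂)
    (hgap : d₁ + q₁ + τg ≤ d₂ ∨ d₂ + q₂ + τg ≤ d₁) :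
    tvDist (P.map fun ω => (slice 0 n0 h₀ (Z ω), slice d₁ q₁ h₁ (Z ω), slice d₂ q₂ h₂ (Z ω)))
      ((P.map fun ω => slice 0 n0 h₀ (Z ω)).prod
        ((P.map fun ω => slice d₁ q₁ h₁ (Z ω)).prod (P.map fun ω => slice d₂ q₂ h₂ (Z ω)))) ≤
      betaMix P n Z Z' τs + betaMix P n Z Z' τg := by
  have hpair : tvDist (P.map fun ω => (slice d₁ q₁ h₁ (Z ω), slice d₂ q₂ h₂ (Z ω)))
      ((P.map fun ω => slice d₁ q₁ h₁ (Z ω)).prod (P.map fun ω => slice d₂ q₂ h₂ (Z ω))) ≤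
      betaMix P n Z Z' τg := by
    rcases hgap with hgap | hgap
    · refine tvDist_map_prodMk_le_betaMix hZ hZ' hcopy hindep (measurable_slice _ _ _)
        (measurable_slice _ _ _) (c := d₁ + q₁ - 1) (by omega)
        (dependsOn_slice fun i _ _ => ?_) (dependsOn_slice fun i _ _ => ?_) <;>
      simp only [Set.mem_ofPred_eq] <;> omega
    · refine tvDist_map_prodMk_swap_le_betaMix hZ hZ' hcopy hindep (measurable_slice _ _ _)
        (measurable_slice _ _ _) (c := d₂ + q₂ - 1) (by omega)
        (dependsOn_slice fun i _ _ => ?_) (dependsOn_slice fun i _ _ => ?_) <;>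
      simp only [Set.mem_ofPred_eq] <;> omega
  refine (tvDist_map_prodMk_prod_le_betaMix_add hZ hZ' hcopy hindep (measurable_slice _ _ _)
    ((measurable_slice _ _ _).prodMk (measurable_slice _ _ _)) (c := n0 - 1) (τ := τs)
    (by omega) (dependsOn_slice fun i _ _ => ?_)
    ((dependsOn_slice fun i _ _ => ?_).prodMk (dependsOn_slice fun i _ _ => ?_)) _).trans
    (add_le_add le_rfl hpair) <;>
  simp only [Set.mem_ofPred_eq] <;> omega

end Stretches

section SplitConformal

variable {Ω α : Type*} [MeasurableSpace Ω] [MeasurableSpace α] {P : Measure Ω}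
  [IsProbabilityMeasure P] {n : ℕ} {Z Z' : Ω → Fin (n + 1) → α} {n0 L : ℕ}
  {A : (Fin n0 → α) → (Fin (L + 1) → α) → ℝ} {τs m k τ : ℕ}

theorem switchCoef_splitScores_le_of_le_add (hZ : Measurable Z) (hZ' : Measurable Z')
    (hst : Stationary P Z) (hcopy : P.map Z' = P.map Z) (hindep : IndepFun Z Z' P)
    (hA : Measurable fun x : (Fin n0 → α) × (Fin (L + 1) → α) => A x.1 x.2) (hn0 : 1 ≤ n0)
    (h : n0 + τs + (m + L) ≤ n + 1) (hk : m ≤ k + τ) (hkm : k ≤ m) :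
    switchCoef P (fun ω => splitScores A τs m h (Z ω)) k τ ≤ 2 * betaMix P n Z Z' τs := by
  rcases le_or_gt m τ with hτ | hτ
  · rw [switchCoef_eq_zero_of_le _ _ _ hτ]
    exact mul_nonneg zero_le_two (betaMix_nonneg _ _ _ _ _)
  let t : (Fin (n + 1) → α) → Fin n0 → α := slice 0 n0 (by omega)
  let s : (Fin (n + 1) → α) → Fin (m - τ + L) → α := slice (n0 + τs + τ) _ (by omega)
  let s' : (Fin (n + 1) → α) → Fin (m - τ + L) → α := slice (n0 + τs + (k + τ - m)) _ (by omega)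
  have h₀ (z : Fin (n + 1) → α) : delta0 m k τ (splitScores A τs m h z) =
      blockScores A (t z) (s z) := by
    rw [splitScores_eq_blockScores, delta0_blockScores_of_le _ _ hτ.le hk, slice_slice]
  have h₁ (z : Fin (n + 1) → α) : delta1 m k τ (splitScores A τs m h z) =
      blockScores A (t z) (s' z) := by
    rw [splitScores_eq_blockScores, delta1_blockScores_of_le _ _ hτ.le hk hkm, slice_slice]
  let M := (P.map fun ω => t (Z ω)).prod (P.map fun ω => s (Z ω))
  have hX₀ : tvDist (P.map fun ω => (t (Z ω), s (Z ω))) M ≤ betaMix P n Z Z' τs :=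
    tvDist_map_slice_prod_le hZ hZ' hst hcopy hindep hn0 _ _ _ (by omega) (by omega)
  have hX₁ : tvDist (P.map fun ω => (t (Z ω), s' (Z ω))) M ≤ betaMix P n Z Z' τs :=
    tvDist_map_slice_prod_le hZ hZ' hst hcopy hindep hn0 _ _ _ (by omega) (by omega)
  have hX (u : (Fin (n + 1) → α) → Fin (m - τ + L) → α) (hu : Measurable u) :
      Measurable fun ω => (t (Z ω), u (Z ω)) :=
    ((measurable_slice _ _ _).comp hZ).prodMk (hu.comp hZ)
  simp only [switchCoef, h₀, h₁]
  refine (dTV_comp_le_tvDist_add P (measurable_blockScores hA _) (hX s (measurable_slice _ _ _))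
    (hX s' (measurable_slice _ _ _)) M).trans ?_
  linarith

theorem switchCoef_splitScores_le_of_add_lt (hZ : Measurable Z) (hZ' : Measurable Z')
    (hst : Stationary P Z) (hcopy : P.map Z' = P.map Z) (hindep : IndepFun Z Z' P)
    (hA : Measurable fun x : (Fin n0 → α) × (Fin (L + 1) → α) => A x.1 x.2) (hn0 : 1 ≤ n0)
    (h : n0 + τs + (m + L) ≤ n + 1) (hτL : L ≤ τ) (hk : 0 < k) (hkτ : k + τ < m) :
    switchCoef P (fun ω => splitScores A τs m h (Z ω)) k τ ≤
      2 * betaMix P n Z Z' τs + 2 * betaMix P n Z Z' (τ - L) := by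
  let t : (Fin (n + 1) → α) → Fin n0 → α := slice 0 n0 (by omega)
  let s₁ : (Fin (n + 1) → α) → Fin (m - τ - k + L) → α := slice (n0 + τs) _ (by omega)
  let s₂ : (Fin (n + 1) → α) → Fin (k + L) → α := slice (n0 + τs + (m - k)) _ (by omega)
  let s₁' : (Fin (n + 1) → α) → Fin (m - τ - k + L) → α := slice (n0 + τs + (k + τ)) _ (by omega)
  let s₂' : (Fin (n + 1) → α) → Fin (k + L) → α := slice (n0 + τs) _ (by omega)
  have h₀ (z : Fin (n + 1) → α) : delta0 m k τ (splitScores A τs m h z) =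
      fun i => twoBlockScores A (t z) (s₁ z) (s₂ z) (Fin.cast (by omega) i) := by
    rw [splitScores_eq_blockScores, delta0_blockScores_of_add_lt _ _ hkτ, slice_slice,
      slice_slice]; rfl
  have h₁ (z : Fin (n + 1) → α) : delta1 m k τ (splitScores A τs m h z) =
      fun i => twoBlockScores A (t z) (s₁' z) (s₂' z) (Fin.cast (by omega) i) := by
    rw [splitScores_eq_blockScores, delta1_blockScores_of_add_lt _ _ hkτ, slice_slice,
      slice_slice]; rfl
  let M := (P.map fun ω => t (Z ω)).prod ((P.map fun ω => s₁ (Z ω)).prod (P.map fun ω => s₂ (Z ω)))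
  have hX₀ : tvDist (P.map fun ω => (t (Z ω), s₁ (Z ω), s₂ (Z ω))) M ≤
      betaMix P n Z Z' τs + betaMix P n Z Z' (τ - L) :=
    tvDist_map_slice_prod_prod_le hZ hZ' hcopy hindep hn0 _ _ _ (by omega) (by omega)
      (by omega) (by omega) (Or.inl (by omega))
  have hX₁ : tvDist (P.map fun ω => (t (Z ω), s₁' (Z ω), s₂' (Z ω))) M ≤
      betaMix P n Z Z' τs + betaMix P n Z Z' (τ - L) := by
    simp only [M]
    rw [show P.map (fun ω => s₁ (Z ω)) = P.map (fun ω => s₁' (Z ω)) from hst.map_slice_eq _ _,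
      show P.map (fun ω => s₂ (Z ω)) = P.map (fun ω => s₂' (Z ω)) from hst.map_slice_eq _ _]
    exact tvDist_map_slice_prod_prod_le hZ hZ' hcopy hindep hn0 _ _ _ (by omega) (by omega)
      (by omega) (by omega) (Or.inr (by omega))
  have hX (u₁ : (Fin (n + 1) → α) → Fin (m - τ - k + L) → α)
      (u₂ : (Fin (n + 1) → α) → Fin (k + L) → α) (hu₁ : Measurable u₁) (hu₂ : Measurable u₂) :
      Measurable fun ω => (t (Z ω), u₁ (Z ω), u₂ (Z ω)) :=
    ((measurable_slice _ _ _).comp hZ).prodMk ((hu₁.comp hZ).prodMk (hu₂.comp hZ))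
  simp only [switchCoef, h₀, h₁]
  refine (dTV_comp_le_tvDist_add P (measurable_pi_lambda _ fun i => (measurable_pi_apply _).comp
    (measurable_twoBlockScores hA _ _)) (hX s₁ s₂ (measurable_slice _ _ _) (measurable_slice _ _ _))
    (hX s₁' s₂' (measurable_slice _ _ _) (measurable_slice _ _ _)) M).trans ?_
  linarith

end SplitConformal

/-- Proposition 3: switch coefficients of the truncated split-conformal score vector are
bounded by β-mixing coefficients of the stationary data sequence. -/
theorem stmt16 {Ω α : Type*} [MeasurableSpace Ω] [MeasurableSpace α]
    (P : Measure Ω) [IsProbabilityMeasure P] {n0 n1 L : ℕ} (hn0 : 1 ≤ n0) (hL : L < n1)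
    (Z Z' : Ω → Fin (n0 + n1 + 1) → α) (hZ : Measurable Z) (hZ' : Measurable Z')
    (hst : Stationary P Z) (hcopy : Measure.map Z' P = Measure.map Z P)
    (hindep : ProbabilityTheory.IndepFun Z Z' P)
    (A : (Fin n0 → α) → (Fin (L + 1) → α) → ℝ)
    (hA : Measurable fun p : (Fin n0 → α) × (Fin (L + 1) → α) => A p.1 p.2)
    (τ τs k : ℕ) (hτL : L ≤ τ) (hk1 : 1 ≤ k)
    (hk2 : k ≤ n1 - L + 1 - τs) :
    (k ≤ n1 - τ - τs →
        switchCoef P (fun ω (j : Fin (n1 - L + 1 - τs)) =>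
            A (fun t : Fin n0 => Z ω ⟨t.val, by have := t.isLt; omega⟩)
              (fun l : Fin (L + 1) =>
                Z ω ⟨n0 + L + τs + j.val - l.val, by have := j.isLt; omega⟩)) k τ
          ≤ 2 * betaMix P (n0 + n1) Z Z' τs + 2 * betaMix P (n0 + n1) Z Z' (τ - L)) ∧
      (n1 - τ - τs < k →
        switchCoef P (fun ω (j : Fin (n1 - L + 1 - τs)) =>
            A (fun t : Fin n0 => Z ω ⟨t.val, by have := t.isLt; omega⟩)
              (fun l : Fin (L + 1) =>
                Z ω ⟨n0 + L + τs + j.val - l.val, by have := j.isLt; omega⟩)) k τ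
          ≤ 2 * betaMix P (n0 + n1) Z Z' τs) := by
  have h : n0 + τs + (n1 - L + 1 - τs + L) ≤ n0 + n1 + 1 := by omega
  have hB (hk : n1 - L + 1 - τs ≤ k + τ) :=
    switchCoef_splitScores_le_of_le_add hZ hZ' hst hcopy hindep hA hn0 h hk hk2
  refine ⟨fun _ => ?_, fun hk => hB (by omega)⟩
  rcases lt_or_ge (k + τ) (n1 - L + 1 - τs) with hkτ | hkτ
  · exact switchCoef_splitScores_le_of_add_lt hZ hZ' hst hcopy hindep hA hn0 h hτL hk1 hkτ
  · exact (hB hkτ).trans (le_add_of_nonneg_right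
      (mul_nonneg zero_le_two (betaMix_nonneg P (n0 + n1) Z Z' (τ - L))))
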